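/- arXiv:1604.02311 — 3 statements merged into one kernel-verified Lean document; each statement's English description precedes it below -/
import Mathlib

section
/- Let T be a Y(2|1) T-family in A, let ℓ ≥ 1, and let v, u₁, …, u_ℓ ∈ ℂ be such that the list (v, u₁, …, u_ℓ) is admissible. Then T₁₂(v)·𝕋₁₃(ū) = f(ū,v)·𝕋₁₃(ū)·T₁₂(v) + Σ_{k=1}^{ℓ} g(v,uₖ)·g(ūₖ,uₖ)·T₁₃(v)·𝕋₁₃(ūₖ)·T₁₂(uₖ), where ūₖ denotes ū with uₖ removed, f(ū,v) = ∏ⱼ f(uⱼ,v) and g(ūₖ,uₖ) = ∏_{j≠k} g(uⱼ,uₖ). -/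
/-!
Induction on `ℓ`, peeling off `u₁`: `𝕋₁₃(ū) = h(ū₁, u₁)⁻¹ T₁₃(u₁) 𝕋₁₃(ū₁)`. Moving `T₁₂(v)` past
`T₁₃(u₁)` gives `f(u₁,v) T₁₃(u₁) T₁₂(v) + g(v,u₁) T₁₃(v) T₁₂(u₁)`, and the induction hypothesis
then applies to `T₁₂(v) 𝕋₁₃(ū₁)` and to `T₁₂(u₁) 𝕋₁₃(ū₁)`. The wanted term and the term `k = 1`
come out at once since `f = g h`. In each remaining pair of terms, the odd relation
`f(u₁,v) T₁₃(u₁) T₁₃(v) = -f(v,u₁) T₁₃(v) T₁₃(u₁)` brings both to the same operator, and with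
`w = uₖ` the coefficients combine by `g(v,u₁) g(u₁,w) - f(v,u₁) g(v,w) = h(w,u₁) g(v,w) g(u₁,w)`,
whose factor `h(w,u₁)` is exactly what turns `T₁₃(u₁) 𝕋₁₃(ū_{1k})` (both `u₁` and `uₖ` removed) into a
multiple of `𝕋₁₃(ūₖ)`.
-/

open scoped BigOperators
open MulOpposite

noncomputable section

namespace Bethe

variable {A : Type*} [Ring A] [Algebra ℂ A]

/-- `g(u,v) = c/(u-v)` -/
def gg (c u v : ℂ) : ℂ := c / (u - v)

/-- `f(u,v) = (u-v+c)/(u-v)` -/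
def ff (c u v : ℂ) : ℂ := (u - v + c) / (u - v)

/-- `h(u,v) = (u-v+c)/c` -/
def hh (c u v : ℂ) : ℂ := (u - v + c) / c

/-- A list of parameters is admissible if its entries are pairwise distinct and
`x - y + c ≠ 0` for any two distinct entries `x`, `y`. -/
def Admissible (c : ℂ) (l : List ℂ) : Prop :=
  l.Pairwise fun x y => x ≠ y ∧ x - y + c ≠ 0 ∧ y - x + c ≠ 0

/-- `∏_{x ∈ xs} ∏_{y ∈ ys} f(x,y)` -/
def prodFF (c : ℂ) (xs ys : List ℂ) : ℂ :=
  (xs.map fun x => (ys.map fun y => ff c x y).prod).prod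

/-- `∏_{x ∈ xs} ∏_{y ∈ ys} g(x,y)` -/
def prodGG (c : ℂ) (xs ys : List ℂ) : ℂ :=
  (xs.map fun x => (ys.map fun y => gg c x y).prod).prod

/-- `∏_{x ∈ xs} ∏_{y ∈ ys} h(x,y)` -/
def prodHH (c : ℂ) (xs ys : List ℂ) : ℂ :=
  (xs.map fun x => (ys.map fun y => hh c x y).prod).prod

/-- `H(w̄) = ∏_{j>k} h(wⱼ,wₖ)` -/
def Hnorm (c : ℂ) : List ℂ → ℂ
  | [] => 1
  | x :: xs => ((xs.map fun y => hh c y x).prod) * Hnorm c xs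

/-- `H(w̄*) = ∏_{j<k} h(wⱼ,wₖ)` -/
def HnormRev (c : ℂ) : List ℂ → ℂ
  | [] => 1
  | x :: xs => ((xs.map fun y => hh c x y).prod) * HnormRev c xs

/-- product of `h` over ordered pairs of distinct positions of a list -/
def prodHHne (c : ℂ) (xs : List ℂ) : ℂ :=
  ∏ j : Fin xs.length, ∏ k : Fin xs.length,
    if j ≠ k then hh c (xs.get j) (xs.get k) else 1

/-- ordered product `T(w₁)⋯T(wₙ)` -/
def Tprod (Tij : ℂ → A) (l : List ℂ) : A := (l.map Tij).prod

/-- normalized ordered product `H(w̄)⁻¹ T(w₁)⋯T(wₙ)` -/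
def TT (c : ℂ) (Tij : ℂ → A) (l : List ℂ) : A := (Hnorm c l)⁻¹ • Tprod Tij l

/-- normalized ordered product `H(w̄*)⁻¹ T(w₁)⋯T(wₙ)` -/
def TTrev (c : ℂ) (Tij : ℂ → A) (l : List ℂ) : A := (HnormRev c l)⁻¹ • Tprod Tij l

/-- The defining (RTT) commutation relations of a super-Yangian `T`-family with
`ℤ₂`-grading `p`. -/
def IsTFam (c : ℂ) {N : ℕ} (p : Fin N → ℕ) (T : Fin N → Fin N → ℂ → A) : Prop :=
  ∀ i j k l : Fin N, ∀ z w : ℂ, z ≠ w →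
    T i j z * T k l w - ((-1 : ℂ) ^ ((p i + p j) * (p k + p l))) • (T k l w * T i j z)
      = ((-1 : ℂ) ^ (p l * (p i + p j) + p i * p j) * gg c z w) •
          (T i l z * T k j w - T i l w * T k j z)

/-- the distinguished grading of `gl(2|1)`: `[1]=[2]=0`, `[3]=1` -/
def p21 : Fin 3 → ℕ := ![0, 0, 1]

/-- the distinguished grading of `gl(1|2)`: `[1]=0`, `[2]=[3]=1` -/
def p12 : Fin 3 → ℕ := ![0, 1, 1]

/-- the sublist of `l` given by the positions in `S`, in the inherited order -/
def sel (l : List ℂ) (S : Finset (Fin l.length)) : List ℂ :=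
  (S.sort (· ≤ ·)).map l.get

/-- `λ(w̄) = ∏ⱼ λ(wⱼ)` -/
def lamP (lam2 : ℂ → ℂ) (l : List ℂ) : ℂ := (l.map lam2).prod

/-- The Izergin kernel `K_ℓ(v̄|ū)`. -/
def Kiz (c : ℂ) {ℓ : ℕ} (vs us : Fin ℓ → ℂ) : ℂ :=
  (∏ j : Fin ℓ, ∏ k : Fin ℓ, if (k : ℕ) < (j : ℕ) then gg c (vs j) (vs k) else 1) *
    (∏ j : Fin ℓ, ∏ k : Fin ℓ, if (k : ℕ) < (j : ℕ) then gg c (us k) (us j) else 1) *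
    (∏ j : Fin ℓ, ∏ k : Fin ℓ, hh c (vs j) (us k)) *
    Matrix.det (Matrix.of fun j k => gg c (vs j) (us k) / hh c (vs j) (us k))

/-- The Izergin kernel for lists of equal length (and junk value `0` otherwise). -/
def KizL (c : ℂ) (vs us : List ℂ) : ℂ :=
  if h : vs.length = us.length then
    Kiz c vs.get fun j => us.get (Fin.cast h j)
  else 0

/-- The operator `X_{a,b}(ū,v̄)` of the paper (`Y(2|1)` case). -/
def X (c : ℂ) (T : Fin 3 → Fin 3 → ℂ → A) (u v : List ℂ) : A :=
  ∑ S : Finset (Fin u.length), ∑ Q : Finset (Fin v.length),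
    if S.card = Q.card then
      (prodGG c (sel v Q) (sel u S) * prodFF c (sel u S) (sel u Sᶜ) *
          prodGG c (sel v Qᶜ) (sel v Q) * prodHHne c (sel u S)) •
        (TT c (T 0 2) (sel u S) * Tprod (T 0 1) (sel u Sᶜ) *
          TT c (T 1 2) (sel v Qᶜ) * Tprod (T 1 1) (sel v Q))
    else 0

/-- The operator `Y_{a,b}(ū,v̄)` of the paper (`Y(2|1)` case). -/
def Y (c : ℂ) (T : Fin 3 → Fin 3 → ℂ → A) (u v : List ℂ) : A :=
  ∑ S : Finset (Fin u.length), ∑ Q : Finset (Fin v.length),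
    if S.card = Q.card then
      (KizL c (sel v Q) (sel u S) * prodFF c (sel u S) (sel u Sᶜ) *
          prodGG c (sel v Qᶜ) (sel v Q)) •
        (TT c (T 0 2) (sel v Q) * TT c (T 1 2) (sel v Qᶜ) *
          Tprod (T 0 1) (sel u Sᶜ) * Tprod (T 1 1) (sel u S))
    else 0

/-- First explicit expression for the `Y(2|1)` Bethe vector (operator part,
the weights `λ₂` included as scalars). -/
def PhiA (c : ℂ) (T : Fin 3 → Fin 3 → ℂ → A) (lam2 : ℂ → ℂ) (u v : List ℂ) : A :=
  ∑ S : Finset (Fin u.length), ∑ Q : Finset (Fin v.length),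
    if S.card = Q.card then
      (prodGG c (sel v Q) (sel u S) * prodFF c (sel u S) (sel u Sᶜ) *
          prodGG c (sel v Qᶜ) (sel v Q) * prodHHne c (sel u S) * lamP lam2 (sel v Q)) •
        (TT c (T 0 2) (sel u S) * Tprod (T 0 1) (sel u Sᶜ) * TT c (T 1 2) (sel v Qᶜ))
    else 0

/-- Second explicit expression for the `Y(2|1)` Bethe vector (operator part). -/
def PhiB (c : ℂ) (T : Fin 3 → Fin 3 → ℂ → A) (lam2 : ℂ → ℂ) (u v : List ℂ) : A :=
  ∑ S : Finset (Fin u.length), ∑ Q : Finset (Fin v.length),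
    if S.card = Q.card then
      (KizL c (sel v Q) (sel u S) * prodFF c (sel u S) (sel u Sᶜ) *
          prodGG c (sel v Qᶜ) (sel v Q) * lamP lam2 (sel u S)) •
        (TT c (T 0 2) (sel v Q) * TT c (T 1 2) (sel v Qᶜ) * Tprod (T 0 1) (sel u Sᶜ))
    else 0

/-- First explicit expression for the `Y(1|2)` Bethe vector, without the overall
sign `(-1)^b` (operator part). -/
def PhiTA (c : ℂ) (T : Fin 3 → Fin 3 → ℂ → A) (lam2 : ℂ → ℂ) (u v : List ℂ) : A :=
  ∑ S : Finset (Fin u.length), ∑ Q : Finset (Fin v.length),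
    if S.card = Q.card then
      (prodGG c (sel u S) (sel v Q) * prodFF c (sel v Q) (sel v Qᶜ) *
          prodGG c (sel u Sᶜ) (sel u S) * prodHHne c (sel v Q) * lamP lam2 (sel u S)) •
        (TT c (T 0 2) (sel v Q) * Tprod (T 1 2) (sel v Qᶜ) * TT c (T 0 1) (sel u Sᶜ))
    else 0

/-- Second explicit expression for the `Y(1|2)` Bethe vector, without the overall
sign `(-1)^b` (operator part). -/
def PhiTB (c : ℂ) (T : Fin 3 → Fin 3 → ℂ → A) (lam2 : ℂ → ℂ) (u v : List ℂ) : A :=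
  ∑ S : Finset (Fin u.length), ∑ Q : Finset (Fin v.length),
    if S.card = Q.card then
      (KizL c (sel u S) (sel v Q) * prodFF c (sel v Q) (sel v Qᶜ) *
          prodGG c (sel u Sᶜ) (sel u S) * lamP lam2 (sel v Q)) •
        (TT c (T 0 2) (sel u S) * TT c (T 0 1) (sel u Sᶜ) * Tprod (T 1 2) (sel v Qᶜ))
    else 0

/-- First explicit expression for the dual `Y(2|1)` Bethe vector, without the
overall sign `(-1)^{b(b-1)/2}`.  `E` is a right `A`-module, i.e. a left
`Aᵐᵒᵖ`-module; `op X • Ωd` is `Ωd · X`. -/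
def PsiA {E : Type*} [AddCommGroup E] [Module ℂ E] [Module Aᵐᵒᵖ E]
    (c : ℂ) (T : Fin 3 → Fin 3 → ℂ → A) (lam2 : ℂ → ℂ) (u v : List ℂ) (Ωd : E) : E :=
  ∑ S : Finset (Fin u.length), ∑ Q : Finset (Fin v.length),
    if S.card = Q.card then
      (prodGG c (sel v Q) (sel u S) * prodFF c (sel u S) (sel u Sᶜ) *
          prodGG c (sel v Qᶜ) (sel v Q) * prodHHne c (sel u S) * lamP lam2 (sel v Q)) •
        (op (TTrev c (T 2 1) (sel v Qᶜ) * Tprod (T 1 0) (sel u Sᶜ) *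
              TTrev c (T 2 0) (sel u S)) • Ωd)
    else 0

/-- The dual `Y(2|1)` Bethe vector `Ψ_{a,b}(ū,v̄)`. -/
def Psi {E : Type*} [AddCommGroup E] [Module ℂ E] [Module Aᵐᵒᵖ E]
    (c : ℂ) (T : Fin 3 → Fin 3 → ℂ → A) (lam2 : ℂ → ℂ) (u v : List ℂ) (Ωd : E) : E :=
  ((-1 : ℂ) ^ (v.length * (v.length - 1) / 2)) • PsiA c T lam2 u v Ωd

/-- Second explicit expression for the dual `Y(2|1)` Bethe vector, without the
overall sign `(-1)^{b(b-1)/2}`. -/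
def PsiB {E : Type*} [AddCommGroup E] [Module ℂ E] [Module Aᵐᵒᵖ E]
    (c : ℂ) (T : Fin 3 → Fin 3 → ℂ → A) (lam2 : ℂ → ℂ) (u v : List ℂ) (Ωd : E) : E :=
  ∑ S : Finset (Fin u.length), ∑ Q : Finset (Fin v.length),
    if S.card = Q.card then
      (KizL c (sel v Q) (sel u S) * prodFF c (sel u S) (sel u Sᶜ) *
          prodGG c (sel v Qᶜ) (sel v Q) * lamP lam2 (sel u S)) •
        (op (Tprod (T 1 0) (sel u Sᶜ) * TTrev c (T 2 1) (sel v Qᶜ) *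
              TTrev c (T 2 0) (sel v Q)) • Ωd)
    else 0

lemma ff_eq_one_add_gg (c : ℂ) {z w : ℂ} (hzw : z ≠ w) : ff c z w = 1 + gg c z w := by
  have : z - w ≠ 0 := sub_ne_zero.mpr hzw
  unfold ff gg
  field_simp

lemma ff_eq_one_sub_gg (c : ℂ) {z w : ℂ} (hzw : z ≠ w) : ff c w z = 1 - gg c z w := by
  have : z - w ≠ 0 := sub_ne_zero.mpr hzw
  have : w - z ≠ 0 := sub_ne_zero.mpr hzw.symm
  unfold ff gg
  field_simp
  ring

lemma ff_eq_gg_mul_hh {c : ℂ} (hc : c ≠ 0) (z w : ℂ) : ff c z w = gg c z w * hh c z w := by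
  unfold ff gg hh
  field_simp

lemma prod_map_ff_eq_mul {c : ℂ} (hc : c ≠ 0) (x : ℂ) (l : List ℂ) :
    (l.map fun y => ff c y x).prod
      = (l.map fun y => gg c y x).prod * (l.map fun y => hh c y x).prod := by
  simp only [ff_eq_gg_mul_hh hc, List.prod_map_mul]

lemma gg_mul_gg_sub_ff_mul_gg {c v x w : ℂ} (hvx : v ≠ x) (hvw : v ≠ w) (hxw : x ≠ w) :
    gg c v x * gg c x w - ff c v x * gg c v w = hh c w x * gg c v w * gg c x w := by
  have := sub_ne_zero.mpr hvx
  have := sub_ne_zero.mpr hvw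
  have := sub_ne_zero.mpr hxw
  rcases eq_or_ne c 0 with rfl | hc
  · simp [gg]
  unfold ff gg hh
  field_simp
  ring

lemma hh_ne_zero {c x y : ℂ} (hc : c ≠ 0) (h : y - x + c ≠ 0) : hh c y x ≠ 0 :=
  div_ne_zero h hc

lemma prod_map_hh_ne_zero {c : ℂ} (hc : c ≠ 0) {x : ℂ} {l : List ℂ}
    (hl : ∀ y ∈ l, y - x + c ≠ 0) : (l.map fun y => hh c y x).prod ≠ 0 := by
  refine List.prod_ne_zero fun h0 => ?_
  obtain ⟨y, hy, hy0⟩ := List.mem_map.mp h0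
  exact hh_ne_zero hc (hl y hy) hy0

lemma TT_cons (c : ℂ) (B : ℂ → A) (x : ℂ) (l : List ℂ) :
    TT c B (x :: l) = ((l.map fun y => hh c y x).prod)⁻¹ • (B x * TT c B l) := by
  simp only [TT, Hnorm, Tprod, List.map_cons, List.prod_cons, mul_inv, mul_smul, mul_smul_comm]

lemma _root_.List.prod_map_eq_mul_prod_map_eraseIdx {α M : Type*} [CommMonoid M] (f : α → M)
    (l : List α) (k : Fin l.length) :
    (l.map f).prod = f (l.get k) * ((l.eraseIdx k).map f).prod := by
  rw [← List.eraseIdx_map, ← List.CommMonoid.mul_prod_eraseIdx (i := k) (by simp)]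
  simp

/-- The relations between `B = T₁₃` and `D = T₁₂` that the argument uses; `B` is odd. -/
structure ExchangeRel (c : ℂ) (B D : ℂ → A) : Prop where
  mul_B : ∀ z w, z ≠ w → D z * B w = ff c w z • (B w * D z) + gg c z w • (B z * D w)
  B_mul_B : ∀ z w, z ≠ w → ff c z w • (B z * B w) = (-ff c w z) • (B w * B z)

theorem IsTFam.exchangeRel {c : ℂ} {T : Fin 3 → Fin 3 → ℂ → A} (hT : IsTFam c p21 T) :
    ExchangeRel c (T 0 2) (T 0 1) where
  mul_B z w hzw := by
    have h := hT 0 1 0 2 z w hzw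
    simp only [Fin.isValue, p21, Matrix.cons_val_zero, Matrix.cons_val_one, add_zero,
      Matrix.cons_val, zero_add, mul_one, pow_zero, one_smul, mul_zero, one_mul] at h
    rw [ff_eq_one_sub_gg c hzw]
    linear_combination (norm := module) h
  B_mul_B z w hzw := by
    have h := hT 0 2 0 2 z w hzw
    simp only [Fin.isValue, p21, Matrix.cons_val_zero, Matrix.cons_val, zero_add, mul_one,
      pow_one, neg_smul, one_smul, sub_neg_eq_add, add_zero, neg_mul, one_mul] at h
    rw [ff_eq_one_add_gg c hzw, ff_eq_one_sub_gg c hzw]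
    linear_combination (norm := module) h

namespace ExchangeRel

variable {c : ℂ} {B D : ℂ → A}

lemma B_mul_B_mul (h : ExchangeRel c B D) {z w : ℂ} (hzw : z ≠ w) (R : A) :
    ff c z w • (B z * (B w * R)) = (-ff c w z) • (B w * (B z * R)) := by
  simp only [← mul_assoc, ← smul_mul_assoc, h.B_mul_B z w hzw]

lemma smul_B_mul_B_mul_add (h : ExchangeRel c B D) {v x w : ℂ} (hvx : v ≠ x) (hvw : v ≠ w)
    (hxw : x ≠ w) (R : A) :
    (ff c x v * gg c v w) • (B x * (B v * R)) + (gg c v x * gg c x w) • (B v * (B x * R))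
      = (hh c w x * gg c v w * gg c x w) • (B v * (B x * R)) := by
  rw [mul_comm, mul_smul, h.B_mul_B_mul hvx.symm, smul_smul, ← add_smul,
    ← gg_mul_gg_sub_ff_mul_gg hvx hvw hxw]
  congr 1
  ring

def exchangeSum (c : ℂ) (B D : ℂ → A) (v : ℂ) (u : List ℂ) : A :=
  ∑ k : Fin u.length,
    (gg c v (u.get k) * ((u.eraseIdx (k : ℕ)).map fun x => gg c x (u.get k)).prod) •
      (B v * TT c B (u.eraseIdx (k : ℕ)) * D (u.get k))

lemma exchangeSum_cons (c : ℂ) (B D : ℂ → A) (v x : ℂ) (us : List ℂ) :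
    exchangeSum c B D v (x :: us)
      = (gg c v x * (us.map fun y => gg c y x).prod) • (B v * TT c B us * D x)
        + ∑ j : Fin us.length,
            (gg c v (us.get j) * ((x :: us.eraseIdx j).map fun y => gg c y (us.get j)).prod) •
              (B v * TT c B (x :: us.eraseIdx j) * D (us.get j)) :=
  Fin.sum_univ_succ _

lemma smul_B_mul_exchangeSum_add (h : ExchangeRel c B D) (hc : c ≠ 0) {v x : ℂ} {us : List ℂ}
    (hadm : Admissible c (v :: x :: us)) :
    ((us.map fun y => hh c y x).prod)⁻¹ •
        (ff c x v • (B x * exchangeSum c B D v us) + gg c v x • (B v * exchangeSum c B D x us))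
      = ∑ j : Fin us.length,
          (gg c v (us.get j) * ((x :: us.eraseIdx j).map fun y => gg c y (us.get j)).prod) •
            (B v * TT c B (x :: us.eraseIdx j) * D (us.get j)) := by
  simp only [exchangeSum, Finset.mul_sum, Finset.smul_sum, ← Finset.sum_add_distrib]
  refine Finset.sum_congr rfl fun j _ => ?_
  set w := us.get j
  have hw : w ∈ us := List.get_mem us j
  obtain ⟨hxw, -, hwx⟩ := List.rel_of_pairwise_cons hadm.of_cons hw
  have hvw : v ≠ w := (List.rel_of_pairwise_cons hadm (List.mem_cons_of_mem x hw)).1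
  have hvx : v ≠ x := (List.rel_of_pairwise_cons hadm List.mem_cons_self).1
  have hHj : ((us.eraseIdx j).map fun y => hh c y x).prod⁻¹
      = ((us.map fun y => hh c y x).prod)⁻¹ * hh c w x := by
    rw [List.prod_map_eq_mul_prod_map_eraseIdx _ us j, mul_inv, mul_comm (hh c w x)⁻¹,
      mul_assoc, inv_mul_cancel₀ (hh_ne_zero hc hwx), mul_one]
  rw [TT_cons, hHj]
  simp only [List.map_cons, List.prod_cons, mul_smul_comm, smul_mul_assoc, mul_assoc]
  linear_combination (norm := module)
    (((us.map fun y => hh c y x).prod)⁻¹ * ((us.eraseIdx j).map fun y => gg c y w).prod) •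
      h.smul_B_mul_B_mul_add hvx hvw hxw (TT c B (us.eraseIdx j) * D w)

theorem mul_TT (h : ExchangeRel c B D) (hc : c ≠ 0) {v : ℂ} {u : List ℂ}
    (hadm : Admissible c (v :: u)) :
    D v * TT c B u
      = ((u.map fun x => ff c x v).prod) • (TT c B u * D v) + exchangeSum c B D v u := by
  induction u generalizing v with
  | nil => simp [TT, Hnorm, Tprod, exchangeSum]
  | cons x us ih =>
    have hxus : Admissible c (x :: us) := hadm.of_cons
    have hvus : Admissible c (v :: us) := hadm.sublist (.cons_cons v (List.sublist_cons_self x us))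
    have hvx : v ≠ x := (List.rel_of_pairwise_cons hadm List.mem_cons_self).1
    set H := (us.map fun y => hh c y x).prod
    have hH : H ≠ 0 := prod_map_hh_ne_zero hc fun y hy => (List.rel_of_pairwise_cons hxus hy).2.2
    have hFx : H⁻¹ * (us.map fun y => ff c y x).prod = (us.map fun y => gg c y x).prod := by
      rw [prod_map_ff_eq_mul hc, mul_comm]
      exact mul_inv_cancel_right₀ hH _
    have hD : D v * TT c B (x :: us) = H⁻¹ •
        (ff c x v • (B x * (D v * TT c B us)) + gg c v x • (B v * (D x * TT c B us))) := by
      rw [TT_cons, mul_smul_comm, ← mul_assoc, h.mul_B v x hvx, add_mul, smul_mul_assoc,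
        smul_mul_assoc, mul_assoc, mul_assoc]
    rw [hD, ih hvus, ih hxus, exchangeSum_cons, ← h.smul_B_mul_exchangeSum_add hc hadm, TT_cons]
    simp only [List.map_cons, List.prod_cons, mul_add, smul_add, mul_smul_comm, smul_mul_assoc,
      mul_assoc]
    linear_combination (norm := module) (gg c v x) • hFx • (B v * (TT c B us * D x))

end ExchangeRel

theorem statement0_general (c : ℂ) (hc : c ≠ 0) (T : Fin 3 → Fin 3 → ℂ → A)
    (hT : IsTFam c p21 T) (v : ℂ) (u : List ℂ)
    (hadm : Admissible c (v :: u)) :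
    T 0 1 v * TT c (T 0 2) u
      = ((u.map fun x => ff c x v).prod) • (TT c (T 0 2) u * T 0 1 v)
        + ∑ k : Fin u.length,
            (gg c v (u.get k) *
                ((u.eraseIdx (k : ℕ)).map fun x => gg c x (u.get k)).prod) •
              (T 0 2 v * TT c (T 0 2) (u.eraseIdx (k : ℕ)) * T 0 1 (u.get k)) :=
  hT.exchangeRel.mul_TT hc hadm

/-- multiple commutation relation of `T₁₂` with `𝕋₁₃(ū)` in `Y(2|1)`. -/
theorem statement0 (c : ℂ) (hc : c ≠ 0) (T : Fin 3 → Fin 3 → ℂ → A)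
    (hT : IsTFam c p21 T) (v : ℂ) (u : List ℂ) (hlen : 1 ≤ u.length)
    (hadm : Admissible c (v :: u)) :
    T 0 1 v * TT c (T 0 2) u
      = ((u.map fun x => ff c x v).prod) • (TT c (T 0 2) u * T 0 1 v)
        + ∑ k : Fin u.length,
            (gg c v (u.get k) *
                ((u.eraseIdx (k : ℕ)).map fun x => gg c x (u.get k)).prod) •
              (T 0 2 v * TT c (T 0 2) (u.eraseIdx (k : ℕ)) * T 0 1 (u.get k)) :=
  statement0_general c hc T hT v u hadm

end Bethe
end
end

section
/- Let T be a Y(2|1) T-family in A and let ū = (u₁,…,u_ℓ) be an admissible list. Then for every permutation σ of {1,…,ℓ} one has 𝕋₁₃(u_{σ(1)},…,u_{σ(ℓ)}) = 𝕋₁₃(u₁,…,u_ℓ) and 𝕋₂₃(u_{σ(1)},…,u_{σ(ℓ)}) = 𝕋₂₃(u₁,…,u_ℓ); that is, the normalized ordered products 𝕋₁₃ and 𝕋₂₃ are symmetric functions of their arguments. -/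
open scoped BigOperators
open MulOpposite

noncomputable section

namespace Bethe

variable {A : Type*} [Ring A] [Algebra ℂ A]

/- The odd generators `T₁₃`, `T₂₃` satisfy the exchange relation `h(z,w) T(z)T(w) = h(w,z) T(w)T(z)`.
Hence `H(ū*) T(u₁)⋯T(u_ℓ) = ∏_{j<k} h(uⱼ,uₖ) T(u₁)⋯T(u_ℓ)` is symmetric: an adjacent transposition
swaps the factor `h(x,y)` for `h(y,x)` and permutes the others. So is `H(ū) H(ū*) = ∏_{j≠k} h(uⱼ,uₖ)`,
and `𝕋(ū) = (H(ū) H(ū*))⁻¹ H(ū*) T(u₁)⋯T(u_ℓ)` as soon as `H(ū*) ≠ 0`, which admissibility ensures. -/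

lemma IsTFam.hh_smul_mul_comm {c : ℂ} {N : ℕ} {p : Fin N → ℕ} {T : Fin N → Fin N → ℂ → A}
    (hT : IsTFam c p T) {i j : Fin N} (hi : p i = 0) (hj : p j = 1) (z w : ℂ) :
    hh c z w • (T i j z * T i j w) = hh c w z • (T i j w * T i j z) := by
  rcases eq_or_ne z w with rfl | hzw
  · rfl
  have hrel := hT i j i j z w hzw
  simp only [hi, hj, zero_add, mul_one, pow_one, add_zero] at hrel
  have hzw' : z - w ≠ 0 := sub_ne_zero.2 hzw
  have hg : (1 + gg c z w) • (T i j z * T i j w) = (gg c z w - 1) • (T i j w * T i j z) := by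
    linear_combination (norm := module) hrel
  have e₁ : hh c z w = (z - w) / c * (1 + gg c z w) := by
    unfold hh gg; field_simp
  have e₂ : hh c w z = (z - w) / c * (gg c z w - 1) := by
    unfold hh gg; field_simp; ring
  rw [e₁, e₂, mul_smul, mul_smul, hg]

section Symmetry

variable {c : ℂ} {Tf : ℂ → A}

lemma Admissible.perm {l₁ l₂ : List ℂ} (hp : l₁.Perm l₂) (h : Admissible c l₁) :
    Admissible c l₂ :=
  (hp.pairwise_iff fun hxy => ⟨hxy.1.symm, hxy.2.2, hxy.2.1⟩).1 h

lemma HnormRev_ne_zero (hc : c ≠ 0) : ∀ {l : List ℂ}, Admissible c l → HnormRev c l ≠ 0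
  | [], _ => one_ne_zero
  | x :: xs, hl => by
    obtain ⟨hx, hxs⟩ := List.pairwise_cons.1 hl
    refine mul_ne_zero (List.prod_ne_zero fun hmem => ?_) (HnormRev_ne_zero hc hxs)
    obtain ⟨y, hy, hxy⟩ := List.mem_map.1 hmem
    exact div_ne_zero (hx y hy).2.1 hc hxy

lemma Hnorm_mul_HnormRev_perm {l₁ l₂ : List ℂ} (hp : l₁.Perm l₂) :
    Hnorm c l₁ * HnormRev c l₁ = Hnorm c l₂ * HnormRev c l₂ := by
  induction hp with
  | nil => rfl
  | cons x hp ih =>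
    simp only [Hnorm, HnormRev]
    rw [(hp.map _).prod_eq, (hp.map _).prod_eq, mul_mul_mul_comm, ih, mul_mul_mul_comm]
  | swap x y t =>
    simp only [Hnorm, HnormRev, List.map_cons, List.prod_cons]
    ring
  | trans _ _ ih₁ ih₂ => exact ih₁.trans ih₂

lemma HnormRev_smul_Tprod_perm
    (hTf : ∀ z w, hh c z w • (Tf z * Tf w) = hh c w z • (Tf w * Tf z))
    {l₁ l₂ : List ℂ} (hp : l₁.Perm l₂) :
    HnormRev c l₁ • Tprod Tf l₁ = HnormRev c l₂ • Tprod Tf l₂ := by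
  induction hp with
  | nil => rfl
  | cons x hp ih =>
    simp only [HnormRev, Tprod, List.map_cons, List.prod_cons, mul_smul, ← mul_smul_comm]
    rw [(hp.map _).prod_eq]
    exact congrArg _ (congrArg _ ih)
  | swap x y t =>
    have split : ∀ a b, HnormRev c (a :: b :: t) • Tprod Tf (a :: b :: t) =
        ((t.map (hh c a)).prod * (t.map (hh c b)).prod * HnormRev c t) •
          ((hh c a b • (Tf a * Tf b)) * Tprod Tf t) := by
      intro a b
      simp only [HnormRev, Tprod, List.map_cons, List.prod_cons, smul_mul_assoc, smul_smul,
        mul_assoc]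
      congr 1; ring
    rw [split, split, hTf, mul_comm (t.map (hh c y)).prod]
  | trans _ _ ih₁ ih₂ => exact ih₁.trans ih₂

lemma TT_eq_inv_smul_HnormRev_smul_Tprod {l : List ℂ} (h : HnormRev c l ≠ 0) :
    TT c Tf l = (Hnorm c l * HnormRev c l)⁻¹ • (HnormRev c l • Tprod Tf l) := by
  rw [TT, smul_smul, mul_inv, mul_assoc, inv_mul_cancel₀ h, mul_one]

lemma TT_perm (hc : c ≠ 0)
    (hTf : ∀ z w, hh c z w • (Tf z * Tf w) = hh c w z • (Tf w * Tf z))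
    {l₁ l₂ : List ℂ} (hp : l₁.Perm l₂) (hl : Admissible c l₁) :
    TT c Tf l₁ = TT c Tf l₂ := by
  rw [TT_eq_inv_smul_HnormRev_smul_Tprod (HnormRev_ne_zero hc hl),
    TT_eq_inv_smul_HnormRev_smul_Tprod (HnormRev_ne_zero hc (hl.perm hp)),
    Hnorm_mul_HnormRev_perm hp, HnormRev_smul_Tprod_perm hTf hp]

end Symmetry

/-- the normalized ordered products `𝕋₁₃` and `𝕋₂₃` are symmetric in
their arguments. -/
theorem statement2 (c : ℂ) (hc : c ≠ 0) (T : Fin 3 → Fin 3 → ℂ → A)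
    (hT : IsTFam c p21 T) (u : List ℂ) (hadm : Admissible c u)
    (σ : Equiv.Perm (Fin u.length)) :
    TT c (T 0 2) (List.ofFn fun i => u.get (σ i)) = TT c (T 0 2) u ∧
      TT c (T 1 2) (List.ofFn fun i => u.get (σ i)) = TT c (T 1 2) u := by
  have hp : u.Perm (List.ofFn fun i => u.get (σ i)) := by
    simpa [Function.comp_def, List.ofFn_get] using (σ.ofFn_comp_perm u.get).symm
  exact ⟨(TT_perm hc (hT.hh_smul_mul_comm rfl rfl) hp hadm).symm,
    (TT_perm hc (hT.hh_smul_mul_comm rfl rfl) hp hadm).symm⟩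

end Bethe
end
end

section
/- Let m, n ≥ 0 with N = m + n ≥ 1. Define the grading [i] = 0 for 1 ≤ i ≤ m and [i] = 1 for m < i ≤ N, the tilde grading [i]′ = 0 for 1 ≤ i ≤ n and [i]′ = 1 for n < i ≤ N, and write ī = N + 1 − i. Let A be a unital associative ℂ-algebra and let T_{ij} : ℂ → A (1 ≤ i,j ≤ N) satisfy, for all z ≠ w in ℂ: T_{ij}(z)T_{kl}(w) − (−1)^{([i]+[j])([k]+[l])} T_{kl}(w)T_{ij}(z) = (−1)^{[l]([i]+[j])+[i][j]} g(z,w) (T_{il}(z)T_{kj}(w) − T_{il}(w)T_{kj}(z)). Define S_{ij}(z) = (−1)^{[ī][j̄] + [ī] + 1} · T_{j̄ ī}(z). Then: (i) the family S satisfies the same relations with the grading [·] replaced by [·]′, i.e. for all i,j,k,l and z ≠ w, S_{ij}(z)S_{kl}(w) − (−1)^{([i]′+[j]′)([k]′+[l]′)} S_{kl}(w)S_{ij}(z) = (−1)^{[l]′([i]′+[j]′)+[i]′[j]′} g(z,w) (S_{il}(z)S_{kj}(w) − S_{il}(w)S_{kj}(z)); and (ii) the supertrace is preserved: Σ_{i=1}^{N}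 (−1)^{[i]′} S_{ii}(z) = Σ_{i=1}^{N} (−1)^{[i]} T_{ii}(z) for all z. -/
open scoped BigOperators
open MulOpposite

noncomputable section

namespace Bethe

variable {A : Type*} [Ring A] [Algebra ℂ A]

/-!
Reversing the indices swaps the two distinguished gradings up to parity: `[i]′ ≡ [ī] + 1 (mod 2)`.
The relation for `S` at `(i, j, k, l; z, w)` is the relation for `T` at `(l̄, k̄, j̄, ī; w, z)`
multiplied by signs, using `g(w, z) = -g(z, w)`; since every sign is a power of `-1`, matching
them is an identity between exponents in `ZMod 2`. On the diagonal the sign of `S` cancels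
`(-1)^{[i]′}` up to `(-1)^{[ī]}`, so the supertrace is preserved after reindexing by `i ↦ ī`.
-/

lemma neg_one_pow_eq_of_cast_eq {R : Type*} [Ring R] {a b : ℕ}
    (h : (a : ZMod 2) = b) : (-1 : R) ^ a = (-1) ^ b := by
  rw [neg_one_pow_eq_pow_mod_two, neg_one_pow_eq_pow_mod_two (n := b),
    (ZMod.natCast_eq_natCast_iff' a b 2).mp h]

lemma gg_swap (c z w : ℂ) : gg c w z = -gg c z w := by
  rw [gg, gg, ← neg_sub, div_neg]

/-- The image `φ(T)` of `T` under the isomorphism `φ` of the paper. -/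
def revSuperTranspose {N : ℕ} (p : Fin N → ℕ) (T : Fin N → Fin N → ℂ → A) :
    Fin N → Fin N → ℂ → A :=
  fun i j z => ((-1 : ℂ) ^ (p i.rev * p j.rev + p i.rev + 1)) • T j.rev i.rev z

theorem IsTFam.revSuperTranspose {c : ℂ} {N : ℕ} {p p' : Fin N → ℕ}
    {T : Fin N → Fin N → ℂ → A} (hT : IsTFam c p T)
    (hpp' : ∀ i, (p' i : ZMod 2) = p i.rev + 1) :
    IsTFam c p' (revSuperTranspose p T) := by
  intro i j k l z w hzw
  set σ : Fin N → Fin N → ℂ := fun a b => (-1) ^ (p a.rev * p b.rev + p a.rev + 1) with hσ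
  have key := hT l.rev k.rev j.rev i.rev w z hzw.symm
  rw [gg_swap, sub_eq_iff_eq_add] at key
  have hswap_sign : (-1 : ℂ) ^ ((p' i + p' j) * (p' k + p' l)) *
      (-1) ^ ((p l.rev + p k.rev) * (p j.rev + p i.rev)) = 1 := by
    rw [← pow_add, ← pow_zero (-1 : ℂ)]
    apply neg_one_pow_eq_of_cast_eq
    push_cast [hpp']
    ring_nf; reduce_mod_char
  have hsign : (-1 : ℂ) ^ ((p' i + p' j) * (p' k + p' l)) * σ i j * σ k l *
      (-1) ^ (p i.rev * (p l.rev + p k.rev) + p l.rev * p k.rev) =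
      -((-1) ^ (p' l * (p' i + p' j) + p' i * p' j) * σ i l * σ k j) := by
    simp only [hσ, ← pow_add, neg_eq_neg_one_mul (_ ^ _ : ℂ), ← pow_succ']
    apply neg_one_pow_eq_of_cast_eq
    push_cast [hpp']
    ring_nf; reduce_mod_char
  simp only [Bethe.revSuperTranspose, smul_mul_smul_comm, key]
  match_scalars
  · linear_combination (-(σ i j * σ k l)) * hswap_sign
  · linear_combination gg c z w * hsign
  · linear_combination -gg c z w * hsign

theorem sum_supertrace_revSuperTranspose {N : ℕ} {p p' : Fin N → ℕ}
    (T : Fin N → Fin N → ℂ → A) (hpp' : ∀ i, (p' i : ZMod 2) = p i.rev + 1) (z : ℂ) :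
    ∑ i, ((-1 : ℂ) ^ p' i) • revSuperTranspose p T i i z = ∑ i, ((-1 : ℂ) ^ p i) • T i i z := by
  have hdiag : ∀ i, ((-1 : ℂ) ^ p' i) • revSuperTranspose p T i i z =
      ((-1 : ℂ) ^ p i.rev) • T i.rev i.rev z := by
    intro i
    rw [revSuperTranspose, smul_smul, ← pow_add]
    congr 1
    apply neg_one_pow_eq_of_cast_eq
    push_cast [hpp']
    generalize (p i.rev : ZMod 2) = x
    revert x
    decide
  simp only [hdiag]
  exact Fintype.sum_bijective Fin.rev Fin.rev_bijective _ _ fun _ => rfl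

def distinguishedGrading {N : ℕ} (m : ℕ) (i : Fin N) : ℕ := if (i : ℕ) < m then 0 else 1

lemma distinguishedGrading_rev {m n : ℕ} (i : Fin (m + n)) :
    (distinguishedGrading n i : ZMod 2) = distinguishedGrading m i.rev + 1 := by
  have hrev : (i.rev : ℕ) = m + n - (i + 1) := Fin.val_rev i
  have hi : (i : ℕ) < m + n := i.isLt
  unfold distinguishedGrading
  split_ifs <;> first | omega | decide

theorem statement15_general (c : ℂ) (m n : ℕ)
    (T : Fin (m + n) → Fin (m + n) → ℂ → A)
    (p p' : Fin (m + n) → ℕ)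
    (hp : ∀ i : Fin (m + n), p i = if (i : ℕ) < m then 0 else 1)
    (hp' : ∀ i : Fin (m + n), p' i = if (i : ℕ) < n then 0 else 1)
    (hT : IsTFam c p T)
    (S : Fin (m + n) → Fin (m + n) → ℂ → A)
    (hS : ∀ i j : Fin (m + n), ∀ z : ℂ,
        S i j z = ((-1 : ℂ) ^ (p i.rev * p j.rev + p i.rev + 1)) • T j.rev i.rev z) :
    IsTFam c p' S ∧
      ∀ z : ℂ,
        (∑ i : Fin (m + n), ((-1 : ℂ) ^ p' i) • S i i z)
          = ∑ i : Fin (m + n), ((-1 : ℂ) ^ p i) • T i i z := by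
  obtain rfl : p = distinguishedGrading m := funext hp
  obtain rfl : p' = distinguishedGrading n := funext hp'
  obtain rfl : S = revSuperTranspose (distinguishedGrading m) T :=
    funext fun i => funext fun j => funext (hS i j)
  exact ⟨hT.revSuperTranspose distinguishedGrading_rev,
    sum_supertrace_revSuperTranspose T distinguishedGrading_rev⟩

/-- the map `φ : T_{ij}(u) ↦ (−1)^{[ī][j̄]+[ī]+1} T_{j̄ī}(u)` sends the
`gl(m|n)` RTT relations to the `gl(n|m)` ones and preserves the supertrace. -/
theorem statement15 (c : ℂ) (hc : c ≠ 0) (m n : ℕ) (hN : 1 ≤ m + n)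
    (T : Fin (m + n) → Fin (m + n) → ℂ → A)
    (p p' : Fin (m + n) → ℕ)
    (hp : ∀ i : Fin (m + n), p i = if (i : ℕ) < m then 0 else 1)
    (hp' : ∀ i : Fin (m + n), p' i = if (i : ℕ) < n then 0 else 1)
    (hT : IsTFam c p T)
    (S : Fin (m + n) → Fin (m + n) → ℂ → A)
    (hS : ∀ i j : Fin (m + n), ∀ z : ℂ,
        S i j z = ((-1 : ℂ) ^ (p i.rev * p j.rev + p i.rev + 1)) • T j.rev i.rev z) :
    IsTFam c p' S ∧
      ∀ z : ℂ,
        (∑ i : Fin (m + n), ((-1 : ℂ) ^ p' i) • S i i z)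
          = ∑ i : Fin (m + n), ((-1 : ℂ) ^ p i) • T i i z :=
  statement15_general c m n T p p' hp hp' hT S hS

end Bethe
end
end
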